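/- If p : E → B is a groupoid fibration and the induced functor on cores υp : υE → υB is an equivalence of groupoids, then p is an equivalence of categories. -/

import Mathlib

open CategoryTheory

universe v₁ v₂ u₁ u₂

variable {E : Type u₁} {B : Type u₂} [Category.{v₁} E] [Category.{v₂} B]

/-- A morphism `χ : e' ⟶ e` of `E` is *cartesian* for `p : E ⥤ B` when, for every `k ∈ E`,
the comparison square of hom-sets induced by `p` is a pullback of sets. -/
def IsCartesianFor (p : E ⥤ B) {e' e : E} (χ : e' ⟶ e) : Prop :=
  ∀ (k : E) (g : k ⟶ e) (β : p.obj k ⟶ p.obj e'),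
    p.map g = β ≫ p.map χ → ∃! h : k ⟶ e', h ≫ χ = g ∧ p.map h = β

/-- `p : E ⥤ B` is a *groupoid fibration* when (i) every `β : b ⟶ p e` factors as
`β = σ.hom ≫ p χ` for some `χ : e' ⟶ e` in `E` and isomorphism `σ : b ≅ p e'`, and
(ii) every morphism of `E` is cartesian for `p`. -/
def GroupoidFibration (p : E ⥤ B) : Prop :=
  (∀ (e : E) (b : B) (β : b ⟶ p.obj e),
      ∃ (e' : E) (χ : e' ⟶ e) (σ : b ≅ p.obj e'), β = σ.hom ≫ p.map χ) ∧
  (∀ {e' e : E} (χ : e' ⟶ e), IsCartesianFor p χ)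

/-- The functor `υ E ⥤ υ B` induced on core groupoids by `p : E ⥤ B`. -/
def coreMap (p : E ⥤ B) : Core E ⥤ Core B where
  obj e := ⟨p.obj e.of⟩
  map f := ⟨p.mapIso f.iso⟩
  map_id _ := Core.hom_ext (by simp)
  map_comp _ _ := Core.hom_ext (by simp)

/-- An endomorphism mapped to the identity by a groupoid fibration is invertible. -/
lemma isIso_of_map_id_of_groupoidFibration (p : E ⥤ B) (hp : GroupoidFibration p)
    {a : E} (h : a ⟶ a) (hh : p.map h = 𝟙 _) : IsIso h := by
  obtain ⟨l, ⟨hl1, hl2⟩, _⟩ := hp.2 h a (𝟙 a) (𝟙 _) (by simp [hh])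
  refine ⟨l, ?_, hl1⟩
  obtain ⟨m, hm, hmu⟩ := hp.2 h a h (𝟙 _) (by simp [hh])
  have h1 : h ≫ l = m := hmu _ ⟨by rw [Category.assoc, hl1, Category.comp_id], by simp [hh, hl2]⟩
  have h2 : 𝟙 a = m := hmu _ ⟨by simp, by simp⟩
  rw [h1, ← h2]

/-- If `p : E ⥤ B` is a groupoid fibration and `υ p : υ E ⥤ υ B` is an equivalence of
groupoids, then `p` is an equivalence of categories. -/
theorem isEquivalence_of_groupoidFibration_core_equiv (p : E ⥤ B)
    (hp : GroupoidFibration p) (hcore : (coreMap p).IsEquivalence) : p.IsEquivalence := by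
  have faithful : p.Faithful := by
    constructor
    intro e' e f g hfg
    obtain ⟨h, ⟨hh1, hh2⟩, _⟩ := hp.2 f e' g (𝟙 _) (by simp [hfg])
    have : IsIso h := isIso_of_map_id_of_groupoidFibration p hp h hh2
    have hcongr : (coreMap p).map
        (show (⟨e'⟩ : Core E) ⟶ (⟨e'⟩ : Core E) from CoreHom.mk (Iso.mk h (inv h) (by simp) (by simp)))
        = (coreMap p).map (𝟙 (⟨e'⟩ : Core E)) := by
      apply Core.hom_ext
      simpa [coreMap] using hh2
    have := (coreMap p).map_injective hcongr
    have : h = 𝟙 e' := congrArg (fun f => f.iso.hom) this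
    rw [this, Category.id_comp] at hh1
    rw [hh1]
  have full : p.Full := by
    constructor
    intro e' e β
    obtain ⟨e'', χ, σ, hσ⟩ := hp.1 e (p.obj e') β
    let σ' : (coreMap p).obj (⟨e'⟩ : Core E) ⟶ (coreMap p).obj (⟨e''⟩ : Core E) :=
      CoreHom.mk (show p.obj e' ≅ p.obj e'' from σ)
    obtain ⟨τ, hτ⟩ := (coreMap p).map_surjective σ'
    refine ⟨τ.iso.hom ≫ χ, ?_⟩
    have : p.map τ.iso.hom = σ.hom := congrArg (fun f => f.iso.hom) hτ
    rw [p.map_comp, this, ← hσ]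
  have essSurj : p.EssSurj := by
    constructor
    intro b
    haveI := hcore.essSurj
    let ε := (coreMap p).objObjPreimageIso (⟨b⟩ : Core B)
    exact ⟨((coreMap p).objPreimage (⟨b⟩ : Core B)).of, ⟨ε.hom.iso⟩⟩
  exact { faithful := faithful, full := full, essSurj := essSurj }
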